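/- arXiv:1810.02638 — 2 statements merged into one kernel-verified Lean document; each statement's English description precedes it below -/
import Mathlib

section
/- Let B be an n×m real matrix and D an m×m diagonal matrix with positive diagonal entries, set Q = B·D⁻¹·Bᵀ, equip ℝᵐ with the inner product ⟨x,y⟩_D = xᵀ·D·y, and let L be any generalized inverse of Q. Let P : ℝᵐ → ℝᵐ be the orthogonal projection of (ℝᵐ, ⟨·,·⟩_D) onto the orthogonal complement of ker(B). Fix indices x, y ∈ {1,…,n} and let γ, γ' ∈ ℝᵐ be any two vectors with B·γ = B·γ' = δ_x − δ_y. Then ⟨γ', P(γ)⟩_D = ⟨P(γ), P(γ)⟩_D = (δ_x − δ_y)ᵀ·L·(δ_x − δ_y); that is, the effective resistance r(x,y) equals the squared D-norm of the projection of any 1-chain with boundary δ_x − δ_y (Thomson's principle). (Paper: Corollary 6.6 and Remark 6.7.) -/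
/-!
Let `D = diag d`. The `D`-projection `p = P γ` is `D`-orthogonal to `ker B`, so `D p` is
orthogonal to `ker B` and therefore lies in the row space of `B`: `D p = Bᵀ w`. Then
`Q w = B D⁻¹ Bᵀ w = B p = δ`, so `⟨p, p⟩_D = pᵀ Bᵀ w = δᵀ w`, and for the symmetric `Q` and
any generalized inverse `L`, `δᵀ L δ = wᵀ Q L Q w = wᵀ Q w = δᵀ w`. The first identity holds
because `γ' - p ∈ ker B` is `D`-orthogonal to `p`.
-/

open Matrix

namespace Matrix

variable {K m n : Type*} [Fintype m]

theorem IsSymm.dotProduct_mulVec_comm [CommSemiring K] {A : Matrix m m K} (hA : A.IsSymm)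
    (u w : m → K) : u ⬝ᵥ A *ᵥ w = w ⬝ᵥ A *ᵥ u := by
  rw [dotProduct_mulVec, ← mulVec_transpose, hA.eq, dotProduct_comm]

theorem dotProduct_mulVec_eq_of_mul_mul_eq_self [CommSemiring K] {Q L : Matrix m m K}
    (hQ : Q.IsSymm) (hL : Q * L * Q = Q) {v w : m → K} (hw : Q *ᵥ w = v) :
    v ⬝ᵥ L *ᵥ v = v ⬝ᵥ w := by
  subst hw
  conv_lhs => arg 1; rw [← hQ.eq, mulVec_transpose]
  rw [← dotProduct_mulVec, mulVec_mulVec, mulVec_mulVec, hL, dotProduct_comm]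

theorem exists_transpose_mulVec_eq_of_orthogonal_ker [Field K] [Fintype n] (B : Matrix n m K)
    {v : m → K} (hv : ∀ z, B *ᵥ z = 0 → v ⬝ᵥ z = 0) : ∃ w, Bᵀ *ᵥ w = v := by
  classical
  have hmem : dotProductEquiv K m v ∈ (LinearMap.ker B.mulVecLin).dualAnnihilator := by
    simpa [Submodule.mem_dualAnnihilator] using hv
  rw [← LinearMap.range_dualMap_eq_dualAnnihilator_ker] at hmem
  obtain ⟨ψ, hψ⟩ := hmem
  obtain ⟨w, rfl⟩ := (dotProductEquiv K n).surjective ψ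
  refine ⟨w, (dotProductEquiv K m).injective (LinearMap.ext fun u => ?_)⟩
  rw [← hψ]
  simp [mulVec_transpose, dotProduct_mulVec]

section OrthogonalToKernel

variable {B : Matrix n m K} {D : Matrix m m K} {p : m → K}

theorem dotProduct_mulVec_eq_of_orthogonal_ker_of_mulVec_eq [CommRing K] (hD : D.IsSymm)
    (hp : ∀ z, B *ᵥ z = 0 → p ⬝ᵥ D *ᵥ z = 0) {q : m → K} (hq : B *ᵥ q = B *ᵥ p) :
    q ⬝ᵥ D *ᵥ p = p ⬝ᵥ D *ᵥ p := by
  have hker : B *ᵥ (q - p) = 0 := by rw [mulVec_sub, hq, sub_self]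
  have horth := hp (q - p) hker
  rw [mulVec_sub, dotProduct_sub, sub_eq_zero] at horth
  rw [hD.dotProduct_mulVec_comm, horth]

theorem dotProduct_mulVec_eq_of_orthogonal_ker [Field K] [Fintype n] [DecidableEq m]
    (hD : D.IsSymm) (hDu : IsUnit D) {L : Matrix n n K}
    (hL : B * D⁻¹ * Bᵀ * L * (B * D⁻¹ * Bᵀ) = B * D⁻¹ * Bᵀ)
    (hp : ∀ z, B *ᵥ z = 0 → p ⬝ᵥ D *ᵥ z = 0) :
    p ⬝ᵥ D *ᵥ p = B *ᵥ p ⬝ᵥ L *ᵥ (B *ᵥ p) := by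
  obtain ⟨w, hw⟩ := exists_transpose_mulVec_eq_of_orthogonal_ker B (v := D *ᵥ p)
    fun z hz => by rw [dotProduct_comm, hD.dotProduct_mulVec_comm, hp z hz]
  have hQ : (B * D⁻¹ * Bᵀ).IsSymm := by
    simp [IsSymm, transpose_mul, hD.inv.eq, Matrix.mul_assoc]
  have hQw : (B * D⁻¹ * Bᵀ) *ᵥ w = B *ᵥ p := by
    rw [← mulVec_mulVec, ← mulVec_mulVec, hw, mulVec_mulVec (M := D⁻¹),
      nonsing_inv_mul _ ((isUnit_iff_isUnit_det D).mp hDu), one_mulVec]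
  rw [dotProduct_mulVec_eq_of_mul_mul_eq_self hQ hL hQw, ← hw, dotProduct_mulVec,
    vecMul_transpose]

end OrthogonalToKernel

end Matrix

/-- **Corollary 6.6 and Remark 6.7 (Thomson's principle).** Let `Q = B D⁻¹ Bᵀ` with `D` a
positive diagonal matrix, `L` any generalized inverse of `Q`, and `P` the orthogonal
projection of `(ℝᵐ, ⟨x,y⟩_D)` onto the orthogonal complement of `ker B`. If `γ, γ'` are any
two vectors with `B γ = B γ' = δ_x - δ_y`, then
`⟨γ', P γ⟩_D = ⟨P γ, P γ⟩_D = (δ_x - δ_y)ᵀ L (δ_x - δ_y)`: the effective resistance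
`r(x,y)` is the squared `D`-norm of the projection of any 1-chain with boundary
`δ_x - δ_y`. -/
theorem thomson_principle
    {n m : ℕ} (B : Matrix (Fin n) (Fin m) ℝ) (d : Fin m → ℝ)
    (hd : ∀ i, 0 < d i)
    (L : Matrix (Fin n) (Fin n) ℝ)
    (hL : (B * (Matrix.diagonal d)⁻¹ * Bᵀ) * L * (B * (Matrix.diagonal d)⁻¹ * Bᵀ)
        = B * (Matrix.diagonal d)⁻¹ * Bᵀ)
    (P : (Fin m → ℝ) → (Fin m → ℝ))
    (hP1 : ∀ γ : Fin m → ℝ, B.mulVec (P γ) = B.mulVec γ)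
    (hP2 : ∀ γ y : Fin m → ℝ, B.mulVec y = 0 →
      P γ ⬝ᵥ (Matrix.diagonal d).mulVec y = 0)
    (x y : Fin n) (γ γ' : Fin m → ℝ)
    (hγ : B.mulVec γ = Pi.single x 1 - Pi.single y 1)
    (hγ' : B.mulVec γ' = Pi.single x 1 - Pi.single y 1) :
    γ' ⬝ᵥ (Matrix.diagonal d).mulVec (P γ) = P γ ⬝ᵥ (Matrix.diagonal d).mulVec (P γ) ∧
    P γ ⬝ᵥ (Matrix.diagonal d).mulVec (P γ) =
      (Pi.single x 1 - Pi.single y 1) ⬝ᵥ L.mulVec (Pi.single x 1 - Pi.single y 1) := by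
  have hdiag : IsUnit (diagonal d) :=
    isUnit_diagonal.mpr (Pi.isUnit_iff.mpr fun i => (hd i).ne'.isUnit)
  have hBP : B *ᵥ P γ = Pi.single x 1 - Pi.single y 1 := by rw [hP1, hγ]
  refine ⟨dotProduct_mulVec_eq_of_orthogonal_ker_of_mulVec_eq (isSymm_diagonal d) (hP2 γ)
    (by rw [hγ', hBP]), ?_⟩
  rw [dotProduct_mulVec_eq_of_orthogonal_ker (isSymm_diagonal d) hdiag hL (hP2 γ), hBP]
end

section
/- Let B be an n×m real matrix (n ≥ 2) each of whose columns equals δ_u − δ_v for some pair of distinct indices u ≠ v, and assume the kernel of Bᵀ is exactly the span of the all-ones vector 𝟙 ∈ ℝⁿ. Let D be an m×m diagonal matrix with positive diagonal entries and set Q = B·D⁻¹·Bᵀ. Fix a column index e and suppose (after relabeling) the e-th column of B equals d := δ_a − δ_n with a < n. Let C be the (n−1)×n matrix with C·δ_i = δ_i for i < n and C·δ_n = δ_a; let B̂ and D̂ be obtained from B and D by deleting the e-th column (resp. the e-th row and column), and set B' := C·B̂ and Q' := B'·D̂⁻¹·B'ᵀ. Let L be a generalized inverse of Q and L' a generalized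 inverse of Q'. Then for all indices x, y ∈ {1,…,n}, writing r_G(x,y) := (δ_x − δ_y)ᵀ·L·(δ_x − δ_y), ξ := (δ_x − δ_y)ᵀ·L·d, and r_{G/e}(x,y) := (C·δ_x − C·δ_y)ᵀ·L'·(C·δ_x − C·δ_y), one has r_{G/e}(x,y) = r_G(x,y) − ξ²/(dᵀ·L·d); in particular r_{G/e}(x,y) ≤ r_G(x,y). (Paper: Corollary C / Corollary 8.5, the quantitative Rayleigh monotonicity law for effective resistances under edge contraction.) -/
/-!
Write `Q = B D⁻¹ Bᵀ`, `d₀ = δ_a - δ_n`, `ρ = d₀ᵀ L d₀` and `ξ = vᵀ L d₀` for `v = δ_x - δ_y`.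
Splitting off the column `e` gives `Q = Q̂ + d_e⁻¹ d₀ d₀ᵀ`, and `C d₀ = 0`, so the contracted
Laplacian is `Q' = C Q̂ Cᵀ = C Q Cᵀ`. The potential `p = L u` of the corrected current
`u = v - (ξ / ρ) d₀` satisfies `Q p = u`, and the coefficient `ξ / ρ` is chosen so that
`d₀ᵀ p = 0`, i.e. `p_a = p_n`. So `p` descends to `G / e` as `p = Cᵀ p'`, with
`Q' p' = C u = C v`. Therefore
`r_{G/e}(x, y) = p'ᵀ Q' p' = pᵀ Q p = uᵀ L u = r_G(x, y) - ξ² / ρ`.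
The choice of generalized inverses does not matter because all currents lie in the range of `Q`
(the vectors with zero sum, as `G` is connected), on which `(Q q)ᵀ L (Q q') = qᵀ Q q'`.
-/

open Matrix

namespace Matrix

variable {ι κ : Type*}

section GeneralizedInverse

variable {R : Type*} [Field R]

theorem mulVec_mulVec_genInv [Fintype ι] {Q L : Matrix ι ι R} (hL : Q * L * Q = Q) {u : ι → R}
    (hu : ∃ q, Q *ᵥ q = u) : Q *ᵥ L *ᵥ u = u := by
  obtain ⟨q, rfl⟩ := hu
  rw [mulVec_mulVec, mulVec_mulVec, hL]

theorem IsSymm.dotProduct_mulVec_comm_s19 [Fintype ι] {Q : Matrix ι ι R} (hQ : Q.IsSymm)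
    (q₁ q₂ : ι → R) : q₁ ⬝ᵥ Q *ᵥ q₂ = q₂ ⬝ᵥ Q *ᵥ q₁ := by
  rw [dotProduct_mulVec, ← mulVec_transpose, hQ.eq, dotProduct_comm]

theorem IsSymm.dotProduct_mulVec_mulVec_genInv [Fintype ι] {Q L : Matrix ι ι R}
    (hQ : Q.IsSymm) (hL : Q * L * Q = Q) (q₁ q₂ : ι → R) :
    Q *ᵥ q₁ ⬝ᵥ L *ᵥ (Q *ᵥ q₂) = q₁ ⬝ᵥ Q *ᵥ q₂ := by
  rw [dotProduct_comm, dotProduct_mulVec, ← mulVec_transpose, hQ.eq, mulVec_mulVec_genInv hL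
    ⟨q₂, rfl⟩, dotProduct_comm]

theorem IsSymm.dotProduct_mulVec_genInv_comm [Fintype ι] {Q L : Matrix ι ι R} (hQ : Q.IsSymm)
    (hL : Q * L * Q = Q) {u w : ι → R} (hu : ∃ q, Q *ᵥ q = u) (hw : ∃ q, Q *ᵥ q = w) :
    u ⬝ᵥ L *ᵥ w = w ⬝ᵥ L *ᵥ u := by
  obtain ⟨qu, rfl⟩ := hu
  obtain ⟨qw, rfl⟩ := hw
  rw [hQ.dotProduct_mulVec_mulVec_genInv hL, hQ.dotProduct_mulVec_mulVec_genInv hL,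
    hQ.dotProduct_mulVec_comm_s19]

theorem IsSymm.mul_mul_transpose [Fintype ι] {Q : Matrix ι ι R} (hQ : Q.IsSymm)
    (C : Matrix κ ι R) : (C * Q * Cᵀ).IsSymm := by
  simp [IsSymm, transpose_mul, hQ.eq, Matrix.mul_assoc]

theorem IsSymm.dotProduct_genInv_conj_eq_sub_sq_div [Fintype ι] [Fintype κ]
    {Q L : Matrix ι ι R} {C : Matrix κ ι R} {L' : Matrix κ κ R} (hQ : Q.IsSymm)
    (hL : Q * L * Q = Q) (hL' : C * Q * Cᵀ * L' * (C * Q * Cᵀ) = C * Q * Cᵀ) {v d₀ : ι → R}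
    (hv : ∃ q, Q *ᵥ q = v) (hd₀ : ∃ q, Q *ᵥ q = d₀) (hCd₀ : C *ᵥ d₀ = 0)
    (hlift : ∀ p, d₀ ⬝ᵥ p = 0 → ∃ p', Cᵀ *ᵥ p' = p) (hρ : d₀ ⬝ᵥ L *ᵥ d₀ ≠ 0) :
    C *ᵥ v ⬝ᵥ L' *ᵥ (C *ᵥ v) =
      v ⬝ᵥ L *ᵥ v - (v ⬝ᵥ L *ᵥ d₀) ^ 2 / (d₀ ⬝ᵥ L *ᵥ d₀) := by
  set ξ := v ⬝ᵥ L *ᵥ d₀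
  set ρ := d₀ ⬝ᵥ L *ᵥ d₀
  set u := v - (ξ / ρ) • d₀ with hu
  have hu_range : ∃ q, Q *ᵥ q = u := by
    obtain ⟨qv, hqv⟩ := hv
    obtain ⟨qd, hqd⟩ := hd₀
    exact ⟨qv - (ξ / ρ) • qd, by rw [mulVec_sub, mulVec_smul, hqv, hqd]⟩
  have hξ : d₀ ⬝ᵥ L *ᵥ v = ξ := hQ.dotProduct_mulVec_genInv_comm hL hd₀ hv
  have hd₀p : d₀ ⬝ᵥ L *ᵥ u = 0 := by
    simp only [u, mulVec_sub, mulVec_smul, dotProduct_sub, dotProduct_smul, smul_eq_mul, hξ]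
    field_simp
    ring
  obtain ⟨p', hp'⟩ := hlift _ hd₀p
  have hQ'p' : (C * Q * Cᵀ) *ᵥ p' = C *ᵥ v := by
    rw [← mulVec_mulVec, ← mulVec_mulVec, hp', mulVec_mulVec_genInv hL hu_range, hu,
      mulVec_sub, mulVec_smul, hCd₀, smul_zero, sub_zero]
  calc C *ᵥ v ⬝ᵥ L' *ᵥ (C *ᵥ v)
      = p' ⬝ᵥ (C * Q * Cᵀ) *ᵥ p' := by
        rw [← hQ'p', (hQ.mul_mul_transpose C).dotProduct_mulVec_mulVec_genInv hL']
    _ = Cᵀ *ᵥ p' ⬝ᵥ Q *ᵥ (Cᵀ *ᵥ p') := by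
        rw [← mulVec_mulVec, ← mulVec_mulVec, dotProduct_mulVec, ← mulVec_transpose]
    _ = u ⬝ᵥ L *ᵥ u := by rw [hp', mulVec_mulVec_genInv hL hu_range, dotProduct_comm]
    _ = v ⬝ᵥ L *ᵥ v - ξ ^ 2 / ρ := by
        simp only [u, mulVec_sub, mulVec_smul, dotProduct_sub, sub_dotProduct, dotProduct_smul,
          smul_dotProduct, smul_eq_mul, hξ]
        field_simp
        ring

end GeneralizedInverse

theorem exists_mulVec_eq_of_isSymm [Fintype ι] [DecidableEq ι] {A : Matrix ι ι ℝ}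
    (hA : A.IsSymm) {u : ι → ℝ} (hu : ∀ w, A *ᵥ w = 0 → u ⬝ᵥ w = 0) : ∃ q, A *ᵥ q = u := by
  have hT : (toEuclideanLin A).IsSymmetric :=
    isSymmetric_toEuclideanLin_iff.mpr (isHermitian_iff_isSymm.mpr hA)
  have hmem : WithLp.toLp 2 u ∈ LinearMap.range (toEuclideanLin A) := by
    rw [← Submodule.orthogonal_orthogonal (LinearMap.range _), hT.orthogonal_range]
    intro w hw
    have hAw : A *ᵥ w.ofLp = 0 := by simpa [toLpLin_apply] using congrArg WithLp.ofLp hw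
    simp [EuclideanSpace.inner_eq_star_dotProduct, hu _ hAw]
  obtain ⟨q, hq⟩ := hmem
  exact ⟨q.ofLp, by simpa [toLpLin_apply] using congrArg WithLp.ofLp hq⟩

theorem PosSemidef.dotProduct_mulVec_mulVec_genInv_pos [Fintype ι] {Q L : Matrix ι ι ℝ}
    (hQ : Q.PosSemidef) (hL : Q * L * Q = Q) {q : ι → ℝ} (hq : Q *ᵥ q ≠ 0) :
    0 < Q *ᵥ q ⬝ᵥ L *ᵥ (Q *ᵥ q) := by
  rw [(isHermitian_iff_isSymm.mp hQ.isHermitian).dotProduct_mulVec_mulVec_genInv hL]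
  refine (hQ.dotProduct_mulVec_nonneg q).lt_of_ne' fun h => hq ?_
  rwa [← hQ.dotProduct_mulVec_zero_iff, star_trivial]

section WeightedGram

theorem inv_diagonal_of_ne_zero [Fintype κ] [DecidableEq κ] {K : Type*} [Field K] {v : κ → K}
    (hv : ∀ j, v j ≠ 0) : (diagonal v)⁻¹ = diagonal v⁻¹ :=
  inv_eq_right_inv <| by simp [diagonal_mul_diagonal, mul_inv_cancel₀ (hv _)]

variable [Fintype κ] [DecidableEq κ]

theorem posSemidef_mul_inv_diagonal_mul_transpose [Fintype ι] (B : Matrix ι κ ℝ) {d : κ → ℝ}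
    (hd : ∀ j, 0 ≤ d j) : (B * (diagonal d)⁻¹ * Bᵀ).PosSemidef := by
  simpa using (PosSemidef.diagonal hd).inv.mul_mul_conjTranspose_same B

theorem transpose_mulVec_eq_zero_of_mulVec_eq_zero [Fintype ι] {B : Matrix ι κ ℝ} {d : κ → ℝ}
    (hd : ∀ j, 0 < d j) {w : ι → ℝ} (hw : (B * (diagonal d)⁻¹ * Bᵀ) *ᵥ w = 0) :
    Bᵀ *ᵥ w = 0 := by
  by_contra hne
  have hpos := (PosDef.diagonal hd).inv.dotProduct_mulVec_pos hne
  rw [star_trivial, mulVec_transpose, ← dotProduct_mulVec, mulVec_mulVec, ← mulVec_transpose,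
    mulVec_mulVec, hw, dotProduct_zero] at hpos
  exact hpos.false

theorem exists_mulVec_eq_of_sum_eq_zero [Fintype ι] [DecidableEq ι] {B : Matrix ι κ ℝ}
    (hker : ∀ w, Bᵀ *ᵥ w = 0 → ∃ c : ℝ, w = fun _ => c) {d : κ → ℝ} (hd : ∀ j, 0 < d j)
    {u : ι → ℝ} (hu : ∑ i, u i = 0) : ∃ q, (B * (diagonal d)⁻¹ * Bᵀ) *ᵥ q = u := by
  refine exists_mulVec_eq_of_isSymm ?_ fun w hw => ?_
  · exact isHermitian_iff_isSymm.mp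
      (posSemidef_mul_inv_diagonal_mul_transpose B fun j => (hd j).le).isHermitian
  · obtain ⟨c, rfl⟩ := hker w (transpose_mulVec_eq_zero_of_mulVec_eq_zero hd hw)
    simp [dotProduct, ← Finset.sum_mul, hu]

end WeightedGram

theorem mul_inv_diagonal_mul_transpose_eq_add {m : ℕ} (B : Matrix ι (Fin (m + 1)) ℝ)
    {d : Fin (m + 1) → ℝ} (hd : ∀ j, d j ≠ 0) (e : Fin (m + 1)) :
    B * (diagonal d)⁻¹ * Bᵀ = B.submatrix id e.succAbove *
        (diagonal fun j => d (e.succAbove j))⁻¹ * (B.submatrix id e.succAbove)ᵀ +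
      (d e)⁻¹ • vecMulVec (fun i => B i e) (fun i => B i e) := by
  ext i k
  rw [inv_diagonal_of_ne_zero hd, inv_diagonal_of_ne_zero fun j => hd _]
  simp only [add_apply, smul_apply, vecMulVec_apply, smul_eq_mul, mul_apply (M := _ * diagonal _),
    mul_diagonal, transpose_apply, submatrix_apply, id, Pi.inv_apply, Fin.sum_univ_succAbove _ e]
  ring

theorem mul_submatrix_succAbove_mul_inv_diagonal_mul_transpose [Fintype ι] {m : ℕ}
    (B : Matrix ι (Fin (m + 1)) ℝ) {d : Fin (m + 1) → ℝ} (hd : ∀ j, d j ≠ 0) (e : Fin (m + 1))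
    {C : Matrix κ ι ℝ} (hC : C *ᵥ (fun i => B i e) = 0) :
    C * B.submatrix id e.succAbove * (diagonal fun j => d (e.succAbove j))⁻¹ *
        (C * B.submatrix id e.succAbove)ᵀ = C * (B * (diagonal d)⁻¹ * Bᵀ) * Cᵀ := by
  rw [mul_inv_diagonal_mul_transpose_eq_add B hd e]
  simp [Matrix.mul_add, mul_vecMulVec, hC, transpose_mul, Matrix.mul_assoc]

section FunctionMatrix

variable [DecidableEq κ] {R : Type*} [CommSemiring R] {σ : ι → κ} {C : Matrix κ ι R}

theorem transpose_mulVec_eq_comp [Fintype κ]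
    (hC : ∀ i j, C i j = if σ j = i then 1 else 0) (p : κ → R) : Cᵀ *ᵥ p = p ∘ σ := by
  ext j
  simp [mulVec, dotProduct, hC]

theorem mulVec_single_one_eq [Fintype ι] [DecidableEq ι]
    (hC : ∀ i j, C i j = if σ j = i then 1 else 0) (j : ι) :
    C *ᵥ Pi.single j 1 = Pi.single (σ j) 1 := by
  ext i
  simp [hC, Pi.single_apply, eq_comm]

end FunctionMatrix

end Matrix

theorem rayleigh_monotonicity_effective_resistance_matrix_form_general
    {n m : ℕ}
    (B : Matrix (Fin (n + 1)) (Fin (m + 1)) ℝ)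
    (hker : ∀ v : Fin (n + 1) → ℝ, Bᵀ.mulVec v = 0 ↔ ∃ c : ℝ, v = fun _ => c)
    (d : Fin (m + 1) → ℝ) (hd : ∀ i, 0 < d i)
    (e : Fin (m + 1)) (a : Fin n)
    (he : (fun i => B i e)
      = (Pi.single a.castSucc 1 - Pi.single (Fin.last n) 1 : Fin (n + 1) → ℝ))
    (C : Matrix (Fin n) (Fin (n + 1)) ℝ)
    (hC : ∀ i j, C i j = if j = Fin.last n then (if i = a then (1 : ℝ) else 0)
      else if j = i.castSucc then 1 else 0)
    (L : Matrix (Fin (n + 1)) (Fin (n + 1)) ℝ)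
    (hL : (B * (Matrix.diagonal d)⁻¹ * Bᵀ) * L * (B * (Matrix.diagonal d)⁻¹ * Bᵀ)
        = B * (Matrix.diagonal d)⁻¹ * Bᵀ)
    (L' : Matrix (Fin n) (Fin n) ℝ)
    (hL' : ((C * B.submatrix id e.succAbove) * (Matrix.diagonal (fun i => d (e.succAbove i)))⁻¹
            * (C * B.submatrix id e.succAbove)ᵀ) * L' *
           ((C * B.submatrix id e.succAbove) * (Matrix.diagonal (fun i => d (e.succAbove i)))⁻¹
            * (C * B.submatrix id e.succAbove)ᵀ)
        = (C * B.submatrix id e.succAbove) * (Matrix.diagonal (fun i => d (e.succAbove i)))⁻¹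
            * (C * B.submatrix id e.succAbove)ᵀ) :
    let d₀ : Fin (n + 1) → ℝ := Pi.single a.castSucc 1 - Pi.single (Fin.last n) 1
    ∀ x y : Fin (n + 1),
      (C.mulVec (Pi.single x 1) - C.mulVec (Pi.single y 1)) ⬝ᵥ
          L'.mulVec (C.mulVec (Pi.single x 1) - C.mulVec (Pi.single y 1)) =
        (Pi.single x 1 - Pi.single y 1) ⬝ᵥ L.mulVec (Pi.single x 1 - Pi.single y 1) -
          ((Pi.single x 1 - Pi.single y 1) ⬝ᵥ L.mulVec d₀) ^ 2 / (d₀ ⬝ᵥ L.mulVec d₀) ∧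
      (C.mulVec (Pi.single x 1) - C.mulVec (Pi.single y 1)) ⬝ᵥ
          L'.mulVec (C.mulVec (Pi.single x 1) - C.mulVec (Pi.single y 1)) ≤
        (Pi.single x 1 - Pi.single y 1) ⬝ᵥ L.mulVec (Pi.single x 1 - Pi.single y 1) := by
  intro d₀ x y
  set Q := B * (diagonal d)⁻¹ * Bᵀ
  have hQ : Q.PosSemidef := posSemidef_mul_inv_diagonal_mul_transpose B fun j => (hd j).le
  have hrange {u : Fin (n + 1) → ℝ} (hu : ∑ i, u i = 0) : ∃ q, Q *ᵥ q = u :=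
    exists_mulVec_eq_of_sum_eq_zero (fun w => (hker w).mp) hd hu
  obtain ⟨qd, hqd⟩ := hrange (u := d₀) (by simp [d₀])
  have hd₀ : d₀ ≠ 0 := fun h => by simpa [d₀, Fin.castSucc_ne_last] using congrFun h a.castSucc
  have hρ : 0 < d₀ ⬝ᵥ L *ᵥ d₀ := hqd ▸ hQ.dotProduct_mulVec_mulVec_genInv_pos hL (hqd ▸ hd₀)
  have hσ : ∀ i j, C i j = if (Fin.lastCases a id j : Fin n) = i then 1 else 0 := by
    intro i j
    induction j using Fin.lastCases <;> simp [hC, eq_comm, Fin.castSucc_ne_last]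
  have hCd₀ : C *ᵥ d₀ = 0 := by
    simp [d₀, mulVec_sub, mulVec_single_one_eq hσ]
  have hlift (p : Fin (n + 1) → ℝ) (hp : d₀ ⬝ᵥ p = 0) : ∃ p', Cᵀ *ᵥ p' = p := by
    refine ⟨fun i => p i.castSucc, ?_⟩
    rw [transpose_mulVec_eq_comp hσ]
    ext j
    induction j using Fin.lastCases with
    | last => simpa [d₀, sub_eq_zero] using hp
    | cast i => simp
  have hQ' := mul_submatrix_succAbove_mul_inv_diagonal_mul_transpose B (fun j => (hd j).ne') e
    (by rw [he]; exact hCd₀)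
  have hmain := (isHermitian_iff_isSymm.mp hQ.isHermitian).dotProduct_genInv_conj_eq_sub_sq_div
    hL (hQ' ▸ hL') (hrange (u := Pi.single x 1 - Pi.single y 1) (by simp)) ⟨qd, hqd⟩ hCd₀ hlift
    hρ.ne'
  rw [← mulVec_sub, hmain]
  exact ⟨rfl, sub_le_self _ (div_nonneg (sq_nonneg _) hρ.le)⟩

/-- **Corollary C / Corollary 8.5 (quantitative Rayleigh monotonicity law), matrix form.**
`B` is the incidence matrix of a connected weighted multigraph on `n + 1 ≥ 2` vertices
(each column is `δ_u - δ_v` for distinct `u, v`; the kernel of `Bᵀ` is exactly the span of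
the all-ones vector), `D = diagonal d` has positive diagonal, and `Q = B D⁻¹ Bᵀ` is the
weighted Laplacian. The `e`-th column of `B` is `d₀ := δ_a - δ_last` with `a < last`.
`C` identifies vertex `last` with `a`; `B' := C ∘ (B with column e deleted)` and
`Q' := B' D̂⁻¹ B'ᵀ` is the Laplacian of the contracted graph `G/e`. If `L`, `L'` are
generalized inverses of `Q`, `Q'`, then for all vertices `x, y`:
`r_{G/e}(x,y) = r_G(x,y) - ξ² / (d₀ᵀ L d₀)` where `r_G(x,y) = (δ_x - δ_y)ᵀ L (δ_x - δ_y)`,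
`ξ = (δ_x - δ_y)ᵀ L d₀`, and `r_{G/e}(x,y) = (C δ_x - C δ_y)ᵀ L' (C δ_x - C δ_y)`;
in particular `r_{G/e}(x,y) ≤ r_G(x,y)`. -/
theorem rayleigh_monotonicity_effective_resistance_matrix_form
    {n m : ℕ} (hn : 1 ≤ n)
    (B : Matrix (Fin (n + 1)) (Fin (m + 1)) ℝ)
    (hcols : ∀ j : Fin (m + 1), ∃ u v : Fin (n + 1), u ≠ v ∧
      (fun i => B i j) = (Pi.single u 1 - Pi.single v 1 : Fin (n + 1) → ℝ))
    (hker : ∀ v : Fin (n + 1) → ℝ, Bᵀ.mulVec v = 0 ↔ ∃ c : ℝ, v = fun _ => c)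
    (d : Fin (m + 1) → ℝ) (hd : ∀ i, 0 < d i)
    (e : Fin (m + 1)) (a : Fin n)
    (he : (fun i => B i e)
      = (Pi.single a.castSucc 1 - Pi.single (Fin.last n) 1 : Fin (n + 1) → ℝ))
    (C : Matrix (Fin n) (Fin (n + 1)) ℝ)
    (hC : ∀ i j, C i j = if j = Fin.last n then (if i = a then (1 : ℝ) else 0)
      else if j = i.castSucc then 1 else 0)
    (L : Matrix (Fin (n + 1)) (Fin (n + 1)) ℝ)
    (hL : (B * (Matrix.diagonal d)⁻¹ * Bᵀ) * L * (B * (Matrix.diagonal d)⁻¹ * Bᵀ)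
        = B * (Matrix.diagonal d)⁻¹ * Bᵀ)
    (L' : Matrix (Fin n) (Fin n) ℝ)
    (hL' : ((C * B.submatrix id e.succAbove) * (Matrix.diagonal (fun i => d (e.succAbove i)))⁻¹
            * (C * B.submatrix id e.succAbove)ᵀ) * L' *
           ((C * B.submatrix id e.succAbove) * (Matrix.diagonal (fun i => d (e.succAbove i)))⁻¹
            * (C * B.submatrix id e.succAbove)ᵀ)
        = (C * B.submatrix id e.succAbove) * (Matrix.diagonal (fun i => d (e.succAbove i)))⁻¹
            * (C * B.submatrix id e.succAbove)ᵀ) :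
    let d₀ : Fin (n + 1) → ℝ := Pi.single a.castSucc 1 - Pi.single (Fin.last n) 1
    ∀ x y : Fin (n + 1),
      (C.mulVec (Pi.single x 1) - C.mulVec (Pi.single y 1)) ⬝ᵥ
          L'.mulVec (C.mulVec (Pi.single x 1) - C.mulVec (Pi.single y 1)) =
        (Pi.single x 1 - Pi.single y 1) ⬝ᵥ L.mulVec (Pi.single x 1 - Pi.single y 1) -
          ((Pi.single x 1 - Pi.single y 1) ⬝ᵥ L.mulVec d₀) ^ 2 / (d₀ ⬝ᵥ L.mulVec d₀) ∧
      (C.mulVec (Pi.single x 1) - C.mulVec (Pi.single y 1)) ⬝ᵥ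
          L'.mulVec (C.mulVec (Pi.single x 1) - C.mulVec (Pi.single y 1)) ≤
        (Pi.single x 1 - Pi.single y 1) ⬝ᵥ L.mulVec (Pi.single x 1 - Pi.single y 1) :=
  rayleigh_monotonicity_effective_resistance_matrix_form_general B hker d hd e a he C hC L hL L' hL'
end
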